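/- Let G̃ be a group with a homomorphism c : G̃ → A to an abelian group A, and let G = ker(c). Let Ũ ≤ G̃ be a subgroup and U = G ∩ Ũ, and suppose that c(G̃') ∩ c(Ũ) = {1} for some subgroup G̃' ≤ G̃ (playing the role of rational points), where G' = G̃' ∩ G. Let X be a set with a G̃-action. Then the natural map from the double quotient G' \ (G × X) / U to G̃' \ (G̃ × X) / Ũ, induced by inclusion, is injective. (Abstract form of Lemma proving φ : S(G,U)(ℂ) → S(G̃,Ũ)(ℂ) is injective.) -/
import Mathlib


/-- Abstract form of the injectivity of φ : S(G,U)(ℂ) → S(G̃,Ũ)(ℂ):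
the natural map between double quotients induced by `G = ker c ↪ G̃` is injective,
assuming `c(G̃') ∩ c(Ũ) = {1}`. -/
theorem double_quotient_map_injective
    {Gt A X : Type*} [Group Gt] [CommGroup A] [MulAction Gt X]
    (c : Gt →* A) (Gp Ut : Subgroup Gt)
    (hint : (Gp.map c) ⊓ (Ut.map c) = ⊥)
    (Rt : Gt × X → Gt × X → Prop)
    (hRt : ∀ p q, Rt p q ↔ ∃ a ∈ Gp, ∃ u ∈ Ut, a * p.1 * u = q.1 ∧ a • p.2 = q.2)
    (R : c.ker × X → c.ker × X → Prop)
    (hR : ∀ p q, R p q ↔ ∃ a ∈ Gp ⊓ c.ker, ∃ u ∈ Ut ⊓ c.ker,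
        a * (p.1 : Gt) * u = (q.1 : Gt) ∧ a • p.2 = q.2)
    (hcompat : ∀ p q, R p q → Rt ((p.1 : Gt), p.2) ((q.1 : Gt), q.2)) :
    Function.Injective
      (Quot.map (fun p : c.ker × X => ((p.1 : Gt), p.2)) hcompat : Quot R → Quot Rt) := by
  have hequiv : Equivalence Rt := by
    constructor
    · intro p
      rw [hRt]
      exact ⟨1, one_mem _, 1, one_mem _, by simp, by simp⟩
    · intro p q h
      rw [hRt] at h ⊢
      obtain ⟨a, ha, u, hu, h1, h2⟩ := h
      refine ⟨a⁻¹, inv_mem ha, u⁻¹, inv_mem hu, ?_, ?_⟩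
      · rw [← h1]; group
      · rw [← h2]; simp
    · intro p q r h h'
      rw [hRt] at h h' ⊢
      obtain ⟨a, ha, u, hu, h1, h2⟩ := h
      obtain ⟨b, hb, v, hv, h3, h4⟩ := h'
      refine ⟨b * a, mul_mem hb ha, u * v, mul_mem hu hv, ?_, ?_⟩
      · rw [← h3, ← h1]; group
      · rw [← h4, ← h2, mul_smul]
  intro x y
  induction x using Quot.ind with | _ p => ?_
  induction y using Quot.ind with | _ q => ?_
  intro h
  have h' : Rt ((p.1 : Gt), p.2) ((q.1 : Gt), q.2) := by
    rw [← hequiv.eqvGen_iff]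
    exact Quot.eq.mp h
  rw [hRt] at h'
  obtain ⟨a, ha, u, hu, h1, h2⟩ := h'
  have hp : c (p.1 : Gt) = 1 := p.1.2
  have hq : c (q.1 : Gt) = 1 := q.1.2
  have hc : c a * c u = 1 := by
    have := congrArg c h1
    simp only [map_mul] at this
    rw [hp, hq] at this
    simpa using this
  have hca : c a ∈ (Gp.map c) ⊓ (Ut.map c) := by
    refine ⟨⟨a, ha, rfl⟩, ⟨u⁻¹, inv_mem hu, ?_⟩⟩
    rw [map_inv]
    exact inv_eq_of_mul_eq_one_left hc
  rw [hint] at hca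
  have hca1 : c a = 1 := hca
  have hcu1 : c u = 1 := by
    rw [hca1, one_mul] at hc
    exact hc
  apply Quot.sound
  rw [hR]
  exact ⟨a, ⟨ha, hca1⟩, u, ⟨hu, hcu1⟩, h1, h2⟩
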